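/- Let ω : ℤ₂ × ℤ₂ → ℤ₂ be defined on canonical representatives ā, b̄ ∈ {0,1} by ω(a,b) = 0 if ā + b̄ < 2 and ω(a,b) = 1 otherwise, and let α : ℤ₂ × ℤ₂ × ℤ₂ → ℂ* be α(a,b,c) = exp((πi/2)·ω(a,b)·c̄), with ω-values lifted to the integers 0 or 1. Then ∑_{g ∈ ℤ₂} (−1)^{ω(g,g) + ω(g,0)} · α(g,0,g) · α(g,g,g) ≠ ∑_{g ∈ ℤ₂} α(g,0,g) · α(g,g,g), i.e. the state sums associated to the two spin structures of L(2,1) take distinct values. -/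

import Mathlib

/-- The `ℤ₂`-valued 2-cocycle on `ℤ₂` given by `ω(a,b) = 0` if `ā + b̄ < 2`
and `ω(a,b) = 1` otherwise, where `ā ∈ {0,1}` is the canonical representative. -/
def omega2 (a b : ZMod 2) : ZMod 2 :=
  if a.val + b.val < 2 then 0 else 1

/-- The 3-cochain `α(a,b,c) = exp((πi/2)·ω(a,b)·c̄)`, with `ω(a,b)` lifted
to the integer `0` or `1`. -/
noncomputable def alpha2 (a b c : ZMod 2) : ℂ :=
  Complex.exp ((Real.pi * Complex.I / 2) * ((omega2 a b).val : ℂ) * (c.val : ℂ))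

theorem ZMod.sum_univ_two {M : Type*} [AddCommMonoid M] (f : ZMod 2 → M) :
    ∑ g, f g = f 0 + f 1 :=
  Fin.sum_univ_two f

theorem omega2_zero_right (a : ZMod 2) : omega2 a 0 = 0 := by
  simp [omega2, ZMod.val_lt a]

theorem omega2_one_one : omega2 1 1 = 1 := by decide

theorem alpha2_eq_one_of_omega2_eq_zero {a b : ZMod 2} (h : omega2 a b = 0) (c : ZMod 2) :
    alpha2 a b c = 1 := by
  simp [alpha2, h]

theorem alpha2_one_one_one : alpha2 1 1 1 = Complex.I := by
  rw [alpha2, omega2_one_one, ZMod.val_one, Nat.cast_one, mul_one, mul_one,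
    show Real.pi * Complex.I / 2 = (Real.pi / 2 : ℝ) * Complex.I by push_cast; ring]
  simp [Complex.exp_mul_I]

/-- The state sums associated to the two spin structures of `L(2,1)` take
distinct values: the invariant is sensitive to the spin structure. -/
theorem Z_L21_spin_sensitive :
    ∑ g : ZMod 2,
      (-1 : ℂ) ^ ((omega2 g g).val + (omega2 g 0).val) * (alpha2 g 0 g * alpha2 g g g) ≠
    ∑ g : ZMod 2, alpha2 g 0 g * alpha2 g g g := by
  have hα00 : ∀ c, alpha2 0 0 c = 1 := alpha2_eq_one_of_omega2_eq_zero (omega2_zero_right 0)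
  have hα10 : ∀ c, alpha2 1 0 c = 1 := alpha2_eq_one_of_omega2_eq_zero (omega2_zero_right 1)
  have hω11 : (omega2 1 1).val = 1 := by rw [omega2_one_one, ZMod.val_one]
  have twisted : ∑ g : ZMod 2, (-1 : ℂ) ^ ((omega2 g g).val + (omega2 g 0).val) *
      (alpha2 g 0 g * alpha2 g g g) = 1 - Complex.I := by
    rw [ZMod.sum_univ_two]
    simp only [omega2_zero_right, hω11, ZMod.val_zero, hα00, hα10, alpha2_one_one_one]
    ring
  have untwisted : ∑ g : ZMod 2, alpha2 g 0 g * alpha2 g g g = 1 + Complex.I := by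
    rw [ZMod.sum_univ_two, hα00, hα10, alpha2_one_one_one]
    ring
  rw [twisted, untwisted]
  intro h
  exact Complex.I_ne_zero (by linear_combination -h / 2)
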